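/- Let ρ be a density matrix on ℂ^d and let Ψ and Φ be quantum channels on ℂ^d with Kraus operators {L_i}_{i=1}^m and {K_j}_{j=1}^n respectively. Then Q_ρ(Ψ)·Q_ρ(Φ) ≥ (1/4) Σ_{i,j} |tr([L_i, K_j†] ρ)|², where [A,B] = AB − BA. -/

import Mathlib

open Matrix
open scoped ComplexOrder

noncomputable section

/-- The positive semidefinite square root of a positive semidefinite matrix
(the Mathlib definition of December 2024, removed since). -/
def Matrix.PosSemidef.sqrt {n : Type*} [Fintype n] [DecidableEq n] {A : Matrix n n ℂ}
    (hA : A.PosSemidef) : Matrix n n ℂ :=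
  hA.1.eigenvectorUnitary.1 * diagonal ((↑) ∘ (√·) ∘ hA.1.eigenvalues) *
  (star hA.1.eigenvectorUnitary : Matrix n n ℂ)

/-- Variance of an operator `K` with respect to a state `ρ`:
`V_ρ(K) = ½ tr((K†K + KK†)ρ) − |tr(Kρ)|²`. -/
def opVar {d : ℕ} (ρ K : Matrix (Fin d) (Fin d) ℂ) : ℝ :=
  (((Kᴴ * K + K * Kᴴ) * ρ).trace).re / 2 - ‖(K * ρ).trace‖ ^ 2

/-- Variance of a channel with Kraus operators `K i`: `V_ρ(Φ) = Σ_i V_ρ(K_i)`. -/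
def chanVar {d n : ℕ} (ρ : Matrix (Fin d) (Fin d) ℂ)
    (K : Fin n → Matrix (Fin d) (Fin d) ℂ) : ℝ :=
  ∑ i, opVar ρ (K i)

/-- Wigner–Yanase skew information of a channel with Kraus operators `K i`:
`I_ρ(Φ) = ½ Σ_i ‖[√ρ, K_i]‖_F²`, where `√ρ` is the PSD square root of `ρ`. -/
def chanSkew {d n : ℕ} (ρ : Matrix (Fin d) (Fin d) ℂ) (hρ : ρ.PosSemidef)
    (K : Fin n → Matrix (Fin d) (Fin d) ℂ) : ℝ :=
  (1 / 2) * ∑ i,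
    (((hρ.sqrt * K i - K i * hρ.sqrt)ᴴ * (hρ.sqrt * K i - K i * hρ.sqrt)).trace).re

/-- Quantum uncertainty of a channel:
`Q_ρ(Φ) = √(V_ρ(Φ)² − (V_ρ(Φ) − I_ρ(Φ))²)`. -/
def chanQ {d n : ℕ} (ρ : Matrix (Fin d) (Fin d) ℂ) (hρ : ρ.PosSemidef)
    (K : Fin n → Matrix (Fin d) (Fin d) ℂ) : ℝ :=
  Real.sqrt ((chanVar ρ K) ^ 2 - (chanVar ρ K - chanSkew ρ hρ K) ^ 2)

/-!
Write `s = √ρ`. For any operator `M`, the commutator `[s, M]` and the centred anticommutator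
`{s, M - tr(Mρ)}` satisfy `‖[s, M]‖² + ‖{s, M - tr(Mρ)}‖² = 4 V_ρ(M)` in the Frobenius norm,
while `‖[s, M]‖² = 2 I_ρ(M)`; hence `Q_ρ(Φ) = ½ (Σᵢ ‖[s, Kᵢ]‖²)^½ (Σᵢ ‖{s, Kᵢ - tr(Kᵢρ)}‖²)^½`.
On the other hand `tr([L, K†] ρ)` is the Frobenius inner product of `[s, K]` with
`{s, L - tr(Lρ)}`, and its conjugate is the same expression with `L` and `K` exchanged.
Cauchy–Schwarz for the Frobenius inner product and then for the sums over `i` and `j` gives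
the bound.
-/

namespace Matrix

section Frobenius

attribute [local instance] Matrix.frobeniusNormedAddCommGroup

variable {𝕜 : Type*} [RCLike 𝕜] {m n : Type*} [Fintype m] [Fintype n]

theorem frobenius_norm_eq_sqrt (A : Matrix m n 𝕜) :
    ‖A‖ = √(∑ i, ∑ j, ‖A i j‖ ^ 2) := by
  rw [frobenius_norm_def, Real.sqrt_eq_rpow]
  simp only [← Real.rpow_natCast]
  norm_num

theorem trace_conjTranspose_mul_eq_sum (A B : Matrix m n 𝕜) :
    (Aᴴ * B).trace = ∑ i, ∑ j, star (A i j) * B i j := by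
  rw [trace, Finset.sum_comm]
  simp [mul_apply]

theorem frobenius_norm_sq_eq_re_trace (A : Matrix m n 𝕜) :
    ‖A‖ ^ 2 = RCLike.re (Aᴴ * A).trace := by
  rw [frobenius_norm_eq_sqrt, Real.sq_sqrt (by positivity), trace_conjTranspose_mul_eq_sum]
  simp only [RCLike.star_def, RCLike.conj_mul, map_sum]
  norm_cast

theorem norm_trace_conjTranspose_mul_le (A B : Matrix m n 𝕜) :
    ‖(Aᴴ * B).trace‖ ≤ ‖A‖ * ‖B‖ := by
  rw [trace_conjTranspose_mul_eq_sum, frobenius_norm_eq_sqrt, frobenius_norm_eq_sqrt,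
    ← Finset.sum_product', ← Finset.sum_product', ← Finset.sum_product']
  calc _ ≤ ∑ p ∈ Finset.univ ×ˢ Finset.univ, ‖A p.1 p.2‖ * ‖B p.1 p.2‖ :=
        (norm_sum_le _ _).trans_eq (by simp)
    _ ≤ _ := Real.sum_mul_le_sqrt_mul_sqrt _ _ _

end Frobenius

namespace PosSemidef

variable {n : Type*} [Fintype n] [DecidableEq n] {A : Matrix n n ℂ}

theorem sqrt_conjTranspose (hA : A.PosSemidef) : hA.sqrtᴴ = hA.sqrt := by
  have hdiag : star (Complex.ofReal ∘ (√·) ∘ hA.1.eigenvalues) =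
      Complex.ofReal ∘ (√·) ∘ hA.1.eigenvalues := by
    funext i; simp
  simp only [PosSemidef.sqrt, conjTranspose_mul, diagonal_conjTranspose, hdiag,
    star_eq_conjTranspose, conjTranspose_conjTranspose, Matrix.mul_assoc]

theorem sqrt_mul_self (hA : A.PosSemidef) : hA.sqrt * hA.sqrt = A := by
  have hU : (star hA.1.eigenvectorUnitary : Matrix n n ℂ) *
      (hA.1.eigenvectorUnitary : Matrix n n ℂ) = 1 := Unitary.coe_star_mul_self _
  conv_rhs => rw [hA.1.spectral_theorem, Unitary.conjStarAlgAut_apply]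
  simp only [PosSemidef.sqrt, Matrix.mul_assoc]
  rw [← Matrix.mul_assoc (star _ : Matrix n n ℂ) _ (diagonal _ * _), hU,
    Matrix.one_mul, ← Matrix.mul_assoc (diagonal _) (diagonal _), diagonal_mul_diagonal]
  congr 3
  funext i
  simp only [Function.comp_apply]
  rw [← Complex.ofReal_mul, Real.mul_self_sqrt (hA.eigenvalues_nonneg i)]
  rfl

end PosSemidef

end Matrix

section Uncertainty

attribute [local instance] Matrix.frobeniusNormedAddCommGroup

variable {ι : Type*} [Fintype ι] {s : Matrix ι ι ℂ}

/-- With `s = √ρ` this is `{√ρ, M - tr(Mρ)}`. -/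
def centredAnticommutator (s M : Matrix ι ι ℂ) : Matrix ι ι ℂ :=
  s * M + M * s - (2 * (M * (s * s)).trace) • s

theorem trace_commutator_mul_mul_self (hs : sᴴ = s) (L K : Matrix ι ι ℂ) :
    ((L * Kᴴ - Kᴴ * L) * (s * s)).trace =
      ((s * K - K * s)ᴴ * centredAnticommutator s L).trace := by
  have h₁ : (Kᴴ * (s * (s * L))).trace = (L * (Kᴴ * (s * s))).trace := by
    rw [trace_mul_comm L]; simp only [Matrix.mul_assoc]
  have h₂ : (Kᴴ * (s * (L * s))).trace = (s * (Kᴴ * (s * L))).trace := by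
    rw [trace_mul_comm s]; simp only [Matrix.mul_assoc]
  have h₃ : (s * (Kᴴ * (L * s))).trace = (Kᴴ * (L * (s * s))).trace := by
    rw [trace_mul_comm s]; simp only [Matrix.mul_assoc]
  have h₄ : (Kᴴ * (s * s)).trace = (s * (Kᴴ * s)).trace := by
    rw [trace_mul_comm s, Matrix.mul_assoc]
  simp only [centredAnticommutator, conjTranspose_sub, conjTranspose_mul, hs, sub_mul, mul_sub,
    mul_add, mul_smul_comm, trace_add, trace_sub, trace_smul, Matrix.mul_assoc, smul_eq_mul]
  rw [h₁, h₂, h₃, h₄]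
  ring

theorem trace_conjTranspose_mul_self_commutator_add_centredAnticommutator (hs : sᴴ = s)
    (htr : (s * s).trace = 1) (M : Matrix ι ι ℂ) :
    ((s * M - M * s)ᴴ * (s * M - M * s)).trace +
        ((centredAnticommutator s M)ᴴ * centredAnticommutator s M).trace =
      2 * ((Mᴴ * M + M * Mᴴ) * (s * s)).trace -
        4 * ((M * (s * s)).trace * star (M * (s * s)).trace) := by
  have hconj : (Mᴴ * (s * s)).trace = star (M * (s * s)).trace := by
    rw [← trace_conjTranspose, conjTranspose_mul, conjTranspose_mul, hs, trace_mul_comm]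
  have h₁ : (Mᴴ * (s * (s * M))).trace = (M * (Mᴴ * (s * s))).trace := by
    rw [trace_mul_comm M]; simp only [Matrix.mul_assoc]
  have h₂ : (s * (Mᴴ * (M * s))).trace = (Mᴴ * (M * (s * s))).trace := by
    rw [trace_mul_comm s]; simp only [Matrix.mul_assoc]
  have h₃ : (Mᴴ * (s * (M * s))).trace = (s * (Mᴴ * (s * M))).trace := by
    rw [trace_mul_comm s]; simp only [Matrix.mul_assoc]
  have h₄ : (s * (Mᴴ * s)).trace = (Mᴴ * (s * s)).trace := by
    rw [trace_mul_comm s, Matrix.mul_assoc]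
  have h₅ : (s * (M * s)).trace = (M * (s * s)).trace := by
    rw [trace_mul_comm s, Matrix.mul_assoc]
  have h₆ : (s * (s * M)).trace = (M * (s * s)).trace := by
    rw [← Matrix.mul_assoc, trace_mul_comm]
  simp only [centredAnticommutator, conjTranspose_sub, conjTranspose_add, conjTranspose_mul,
    conjTranspose_smul, hs, sub_mul, mul_sub, add_mul, mul_add, smul_mul_assoc, mul_smul_comm,
    trace_add, trace_sub, trace_smul, Matrix.mul_assoc, smul_eq_mul, star_mul',
    star_ofNat]
  rw [h₁, h₂, h₃, h₄, h₅, h₆, htr, hconj]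
  ring

theorem norm_commutator_sq_add_norm_centredAnticommutator_sq {d : ℕ}
    {s : Matrix (Fin d) (Fin d) ℂ} (hs : sᴴ = s) (htr : (s * s).trace = 1)
    (M : Matrix (Fin d) (Fin d) ℂ) :
    ‖s * M - M * s‖ ^ 2 + ‖centredAnticommutator s M‖ ^ 2 = 4 * opVar (s * s) M := by
  have h := congrArg Complex.re
    (trace_conjTranspose_mul_self_commutator_add_centredAnticommutator hs htr M)
  rw [frobenius_norm_sq_eq_re_trace, frobenius_norm_sq_eq_re_trace, opVar]
  simp only [RCLike.re_to_complex, Complex.add_re] at h ⊢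
  rw [h, Complex.star_def, Complex.mul_conj, Complex.sub_re]
  simp only [Complex.mul_re, Complex.re_ofNat, Complex.im_ofNat, zero_mul, sub_zero,
    Complex.ofReal_re, Complex.ofReal_im, mul_zero, Complex.sq_norm]
  ring

theorem norm_trace_commutator_conjTranspose_mul_comm {ρ : Matrix ι ι ℂ} (hρ : ρᴴ = ρ)
    (L K : Matrix ι ι ℂ) :
    ‖((K * Lᴴ - Lᴴ * K) * ρ).trace‖ = ‖((L * Kᴴ - Kᴴ * L) * ρ).trace‖ := by
  rw [← norm_star, ← trace_conjTranspose]
  simp only [conjTranspose_mul, conjTranspose_sub, conjTranspose_conjTranspose, hρ]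
  rw [trace_mul_comm]

theorem sq_norm_trace_commutator_mul_mul_self_le (hs : sᴴ = s) (L K : Matrix ι ι ℂ) :
    ‖((L * Kᴴ - Kᴴ * L) * (s * s)).trace‖ ^ 2 ≤
      (‖s * L - L * s‖ * ‖centredAnticommutator s L‖) *
        (‖s * K - K * s‖ * ‖centredAnticommutator s K‖) := by
  have hss : (s * s)ᴴ = s * s := by rw [conjTranspose_mul, hs]
  have h₁ : ‖((L * Kᴴ - Kᴴ * L) * (s * s)).trace‖ ≤
      ‖s * K - K * s‖ * ‖centredAnticommutator s L‖ := by
    rw [trace_commutator_mul_mul_self hs]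
    exact norm_trace_conjTranspose_mul_le _ _
  have h₂ : ‖((L * Kᴴ - Kᴴ * L) * (s * s)).trace‖ ≤
      ‖s * L - L * s‖ * ‖centredAnticommutator s K‖ := by
    rw [← norm_trace_commutator_conjTranspose_mul_comm hss, trace_commutator_mul_mul_self hs]
    exact norm_trace_conjTranspose_mul_le _ _
  rw [sq]
  calc _ ≤ (‖s * L - L * s‖ * ‖centredAnticommutator s K‖) *
          (‖s * K - K * s‖ * ‖centredAnticommutator s L‖) := by gcongr
    _ = _ := by ring

theorem sum_sum_sq_norm_trace_commutator_mul_mul_self_le (hs : sᴴ = s)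
    {κ κ' : Type*} [Fintype κ] [Fintype κ'] (L : κ → Matrix ι ι ℂ) (K : κ' → Matrix ι ι ℂ) :
    ∑ i, ∑ j, ‖((L i * (K j)ᴴ - (K j)ᴴ * L i) * (s * s)).trace‖ ^ 2 ≤
      (∑ i, ‖s * L i - L i * s‖ * ‖centredAnticommutator s (L i)‖) *
        ∑ j, ‖s * K j - K j * s‖ * ‖centredAnticommutator s (K j)‖ := by
  rw [Finset.sum_mul_sum]
  gcongr with i _ j _
  exact sq_norm_trace_commutator_mul_mul_self_le hs (L i) (K j)

theorem sqrt_sq_sub_sq_sub_half_eq {V a b : ℝ} (ha : 0 ≤ a) (hb : 0 ≤ b) (hV : 4 * V = a + b) :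
    √(V ^ 2 - (V - a / 2) ^ 2) = √a * √b / 2 := by
  have h : V ^ 2 - (V - a / 2) ^ 2 = (√a * √b / 2) ^ 2 := by
    rw [div_pow, mul_pow, Real.sq_sqrt ha, Real.sq_sqrt hb]
    linear_combination (a / 4) * hV
  rw [h, Real.sqrt_sq (by positivity)]

variable {d n : ℕ}

theorem chanSkew_eq {ρ : Matrix (Fin d) (Fin d) ℂ} (hρ : ρ.PosSemidef)
    (K : Fin n → Matrix (Fin d) (Fin d) ℂ) :
    chanSkew ρ hρ K = (∑ i, ‖hρ.sqrt * K i - K i * hρ.sqrt‖ ^ 2) / 2 := by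
  simp only [chanSkew, frobenius_norm_sq_eq_re_trace, RCLike.re_to_complex]
  ring

theorem four_mul_chanVar_mul_self {s : Matrix (Fin d) (Fin d) ℂ} (hs : sᴴ = s)
    (htr : (s * s).trace = 1) (K : Fin n → Matrix (Fin d) (Fin d) ℂ) :
    4 * chanVar (s * s) K =
      ∑ i, ‖s * K i - K i * s‖ ^ 2 + ∑ i, ‖centredAnticommutator s (K i)‖ ^ 2 := by
  simp only [chanVar, Finset.mul_sum, ← Finset.sum_add_distrib,
    norm_commutator_sq_add_norm_centredAnticommutator_sq hs htr]

theorem chanQ_eq {ρ : Matrix (Fin d) (Fin d) ℂ} (hρ : ρ.PosSemidef) (htr : ρ.trace = 1)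
    (K : Fin n → Matrix (Fin d) (Fin d) ℂ) :
    chanQ ρ hρ K =
      √(∑ i, ‖hρ.sqrt * K i - K i * hρ.sqrt‖ ^ 2) *
        √(∑ i, ‖centredAnticommutator hρ.sqrt (K i)‖ ^ 2) / 2 := by
  have hvar := four_mul_chanVar_mul_self hρ.sqrt_conjTranspose
    (by rw [hρ.sqrt_mul_self, htr]) K
  rw [hρ.sqrt_mul_self] at hvar
  rw [chanQ, chanSkew_eq]
  exact sqrt_sq_sub_sq_sub_half_eq (by positivity) (by positivity) hvar

theorem stmt_0_general {d m n : ℕ}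
    (ρ : Matrix (Fin d) (Fin d) ℂ) (hρ : ρ.PosSemidef) (htr : ρ.trace = 1)
    (L : Fin m → Matrix (Fin d) (Fin d) ℂ)
    (K : Fin n → Matrix (Fin d) (Fin d) ℂ) :
    chanQ ρ hρ L * chanQ ρ hρ K ≥
      (1 / 4) * ∑ i, ∑ j,
        ‖((L i * (K j)ᴴ - (K j)ᴴ * L i) * ρ).trace‖ ^ 2 := by
  have hsum := sum_sum_sq_norm_trace_commutator_mul_mul_self_le hρ.sqrt_conjTranspose L K
  rw [hρ.sqrt_mul_self] at hsum
  rw [ge_iff_le, chanQ_eq hρ htr L, chanQ_eq hρ htr K]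
  grw [hsum, Real.sum_mul_le_sqrt_mul_sqrt, Real.sum_mul_le_sqrt_mul_sqrt]
  exact le_of_eq (by ring)

/-- Product-form uncertainty relation for two quantum channels (Theorem 1):
`Q_ρ(Ψ) Q_ρ(Φ) ≥ ¼ Σ_{i,j} |tr([L_i, K_j†] ρ)|²`. -/
theorem stmt_0 {d m n : ℕ}
    (ρ : Matrix (Fin d) (Fin d) ℂ) (hρ : ρ.PosSemidef) (htr : ρ.trace = 1)
    (L : Fin m → Matrix (Fin d) (Fin d) ℂ) (hL : ∑ i, (L i)ᴴ * L i = 1)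
    (K : Fin n → Matrix (Fin d) (Fin d) ℂ) (hK : ∑ j, (K j)ᴴ * K j = 1) :
    chanQ ρ hρ L * chanQ ρ hρ K ≥
      (1 / 4) * ∑ i, ∑ j,
        ‖((L i * (K j)ᴴ - (K j)ᴴ * L i) * ρ).trace‖ ^ 2 :=
  stmt_0_general ρ hρ htr L K

end Uncertainty
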